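/- If the family (V_p(τ), τ ∈ T_[S,τ]^p) is a predictable martingale system for τ ∈ A_S^p, then A_S^p := {τ ∈ T_S^p : (V_p(σ), S ≤ σ ≤ τ) is a predictable martingale system} is stable under pairwise maximization: τ₁, τ₂ ∈ A_S^p implies τ₁ ∨ τ₂ ∈ A_S^p. -/

import Mathlib

/-
Write `θ = τ₁ ∨ τ₂` and `ν = τ₁ ∧ τ₂`. It suffices to show `E[V θ | F_{ρ⁻}] = V ρ` for every
predictable `S ≤ ρ ≤ θ`; the martingale property on `[S, θ]` then follows from the tower property.
All comparisons of `V` at two times rest on localization: if `η = η'` on an event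
`A ∈ F_{η⁻} ∩ F_{η'⁻}`, then `V η = V η'` a.s. on `A`.

Set `ζ = ρ ∨ ν`. The event `{τ₂ ≤ τ₁}` lies in `F_{ν⁻} ⊆ F_{ζ⁻}`; on it `V θ = V τ₁` and, by the
martingale property of `τ₁` stopped at `ζ`, `E[V τ₁ | F_{ζ⁻}] = V (ζ ∧ τ₁) = V ζ`; symmetrically
on `{τ₁ ≤ τ₂}`. Hence `E[V θ | F_{ζ⁻}] = V ζ`. Finally `E[V ζ | F_{ρ⁻}] = V ρ`: on `{ρ ≤ ν}` we
have `ζ = ν ∈ A_S^p`, and on `{ν < ρ}` we have `ζ = ρ`, where `V ρ` is `F_{ρ⁻}`-measurable because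
it agrees with `V (ρ ∧ τ₁)` or `V (ρ ∧ τ₂)` on the events `{ρ ≤ τ₁}`, `{τ₁ < ρ}`.
-/

open MeasureTheory Filter

variable {Ω : Type*} {m : MeasurableSpace Ω}

/-- A sequence of stopping times announcing the stopping time `τ`. -/
def Announces (𝓕 : Filtration ℝ m) (τ : Ω → ℝ) (τs : ℕ → Ω → ℝ) : Prop :=
  (∀ n, IsStoppingTime 𝓕 (fun ω => ((τs n ω : ℝ) : WithTop ℝ))) ∧
  (∀ n ω, τs n ω ≤ τs (n + 1) ω) ∧
  (∀ n ω, τs n ω ≤ τ ω) ∧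
  (∀ n ω, 0 < τ ω → τs n ω < τ ω) ∧
  (∀ ω, Tendsto (fun n => τs n ω) atTop (nhds (τ ω)))

/-- A predictable stopping time: a stopping time admitting an announcing sequence. -/
def IsPredST (𝓕 : Filtration ℝ m) (τ : Ω → ℝ) : Prop :=
  IsStoppingTime 𝓕 (fun ω => ((τ ω : ℝ) : WithTop ℝ)) ∧ ∃ τs, Announces 𝓕 τ τs

/-- The σ-algebra `F_{τ⁻}`, generated by `F_0` and the sets `A ∩ {t < τ}`, `A ∈ F_t`. -/
def preMS (𝓕 : Filtration ℝ m) (τ : Ω → ℝ) : MeasurableSpace Ω :=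
  𝓕 0 ⊔ MeasurableSpace.generateFrom
    {s | ∃ (t : ℝ) (A : Set Ω), MeasurableSet[𝓕 t] A ∧ s = A ∩ {ω | t < τ ω}}

/-- `T_0^p` : predictable stopping times with values in `[0, T]`. -/
def T0 (𝓕 : Filtration ℝ m) (T : ℝ) : Set (Ω → ℝ) :=
  {τ | IsPredST 𝓕 τ ∧ ∀ ω, τ ω ∈ Set.Icc 0 T}

/-- `T_S^p` : predictable stopping times in `[0,T]` that dominate `S`. -/
def TS (𝓕 : Filtration ℝ m) (T : ℝ) (S : Ω → ℝ) : Set (Ω → ℝ) :=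
  {τ ∈ T0 𝓕 T | ∀ ω, S ω ≤ τ ω}

/-- `T_{S⁺}^p` : predictable stopping times `τ` with `τ > S` on `{S < T}` and `τ = T` on `{S = T}`. -/
def TSplus (𝓕 : Filtration ℝ m) (T : ℝ) (S : Ω → ℝ) : Set (Ω → ℝ) :=
  {τ ∈ T0 𝓕 T | (∀ ω, S ω < T → S ω < τ ω) ∧ (∀ ω, S ω = T → τ ω = T)}

/-- Predictable admissible reward family. -/
structure Admissible (𝓕 : Filtration ℝ m) (μ : Measure Ω) (T : ℝ)
    (φ : (Ω → ℝ) → Ω → ℝ) : Prop where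
  nonneg : ∀ τ ∈ T0 𝓕 T, ∀ ω, 0 ≤ φ τ ω
  meas : ∀ τ ∈ T0 𝓕 T, Measurable[preMS 𝓕 τ] (φ τ)
  consistent : ∀ τ ∈ T0 𝓕 T, ∀ τ' ∈ T0 𝓕 T, ∀ᵐ ω ∂μ, τ ω = τ' ω → φ τ ω = φ τ' ω

/-- `V` is (a version of) the essential supremum of the family `(g τ)_{τ ∈ 𝒯}`. -/
def IsEssSupFam (μ : Measure Ω) (g : (Ω → ℝ) → Ω → ℝ)
    (𝒯 : Set (Ω → ℝ)) (V : Ω → ℝ) : Prop :=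
  (∀ τ ∈ 𝒯, g τ ≤ᵐ[μ] V) ∧ ∀ W : Ω → ℝ, (∀ τ ∈ 𝒯, g τ ≤ᵐ[μ] W) → V ≤ᵐ[μ] W

/-- `(V σ, S ≤ σ ≤ τ)` is a predictable martingale system on the stochastic interval `[S, τ]`. -/
def MartSysOn (𝓕 : Filtration ℝ m) (μ : Measure Ω) (T : ℝ)
    (V : (Ω → ℝ) → Ω → ℝ) (S τ : Ω → ℝ) : Prop :=
  ∀ σ ∈ T0 𝓕 T, ∀ σ' ∈ T0 𝓕 T, (∀ ω, S ω ≤ σ ω) → (∀ ω, σ ω ≤ σ' ω) →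
    (∀ ω, σ' ω ≤ τ ω) → μ[V σ'|preMS 𝓕 σ] =ᵐ[μ] V σ

section PredictableTimes

variable {𝓕 : Filtration ℝ m} {T : ℝ}

lemma measurableSet_le_of_isStoppingTime {τ : Ω → ℝ}
    (hτ : IsStoppingTime 𝓕 (fun ω => ((τ ω : ℝ) : WithTop ℝ))) (t : ℝ) :
    MeasurableSet[𝓕 t] {ω | τ ω ≤ t} := by
  simpa only [WithTop.coe_le_coe] using hτ t

lemma Announces.max {τ τ' : Ω → ℝ} {a b : ℕ → Ω → ℝ} (ha : Announces 𝓕 τ a)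
    (hb : Announces 𝓕 τ' b) :
    Announces 𝓕 (fun ω => max (τ ω) (τ' ω)) (fun n ω => max (a n ω) (b n ω)) := by
  obtain ⟨ha_st, ha_mono, ha_le, ha_lt, ha_lim⟩ := ha
  obtain ⟨hb_st, hb_mono, hb_le, hb_lt, hb_lim⟩ := hb
  refine ⟨fun n => (ha_st n).max (hb_st n), fun n ω => max_le_max (ha_mono n ω) (hb_mono n ω),
    fun n ω => max_le_max (ha_le n ω) (hb_le n ω), fun n ω hpos => max_lt ?_ ?_,
    fun ω => (ha_lim ω).max (hb_lim ω)⟩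
  · rcases lt_or_ge 0 (τ ω) with h | h
    · exact (ha_lt n ω h).trans_le (le_max_left _ _)
    · exact (ha_le n ω).trans_lt (h.trans_lt hpos)
  · rcases lt_or_ge 0 (τ' ω) with h | h
    · exact (hb_lt n ω h).trans_le (le_max_right _ _)
    · exact (hb_le n ω).trans_lt (h.trans_lt hpos)

lemma Announces.min {τ τ' : Ω → ℝ} {a b : ℕ → Ω → ℝ} (ha : Announces 𝓕 τ a)
    (hb : Announces 𝓕 τ' b) :
    Announces 𝓕 (fun ω => min (τ ω) (τ' ω)) (fun n ω => min (a n ω) (b n ω)) := by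
  obtain ⟨ha_st, ha_mono, ha_le, ha_lt, ha_lim⟩ := ha
  obtain ⟨hb_st, hb_mono, hb_le, hb_lt, hb_lim⟩ := hb
  refine ⟨fun n => (ha_st n).min (hb_st n), fun n ω => min_le_min (ha_mono n ω) (hb_mono n ω),
    fun n ω => min_le_min (ha_le n ω) (hb_le n ω), fun n ω hpos => ?_,
    fun ω => (ha_lim ω).min (hb_lim ω)⟩
  rw [lt_min_iff] at hpos
  exact min_lt_min (ha_lt n ω hpos.1) (hb_lt n ω hpos.2)

lemma max_mem_T0 {τ τ' : Ω → ℝ} (hτ : τ ∈ T0 𝓕 T) (hτ' : τ' ∈ T0 𝓕 T) :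
    (fun ω => max (τ ω) (τ' ω)) ∈ T0 𝓕 T := by
  obtain ⟨⟨hτ_st, a, ha⟩, hτ_mem⟩ := hτ
  obtain ⟨⟨hτ'_st, b, hb⟩, hτ'_mem⟩ := hτ'
  exact ⟨⟨hτ_st.max hτ'_st, _, ha.max hb⟩,
    fun ω => ⟨le_max_of_le_left (hτ_mem ω).1, max_le (hτ_mem ω).2 (hτ'_mem ω).2⟩⟩

lemma min_mem_T0 {τ τ' : Ω → ℝ} (hτ : τ ∈ T0 𝓕 T) (hτ' : τ' ∈ T0 𝓕 T) :
    (fun ω => min (τ ω) (τ' ω)) ∈ T0 𝓕 T := by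
  obtain ⟨⟨hτ_st, a, ha⟩, hτ_mem⟩ := hτ
  obtain ⟨⟨hτ'_st, b, hb⟩, hτ'_mem⟩ := hτ'
  exact ⟨⟨hτ_st.min hτ'_st, _, ha.min hb⟩,
    fun ω => ⟨le_min (hτ_mem ω).1 (hτ'_mem ω).1, min_le_of_left_le (hτ_mem ω).2⟩⟩

end PredictableTimes

section PreMS

variable {𝓕 : Filtration ℝ m} {T : ℝ}

lemma measurableSet_preMS_of_zero {τ : Ω → ℝ} {A : Set Ω} (hA : MeasurableSet[𝓕 0] A) :
    MeasurableSet[preMS 𝓕 τ] A :=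
  le_sup_left (a := 𝓕 0) _ hA

lemma measurableSet_preMS_inter_lt {τ : Ω → ℝ} {t : ℝ} {A : Set Ω}
    (hA : MeasurableSet[𝓕 t] A) : MeasurableSet[preMS 𝓕 τ] (A ∩ {ω | t < τ ω}) :=
  le_sup_right (a := 𝓕 0) _ (MeasurableSpace.measurableSet_generateFrom ⟨t, A, hA, rfl⟩)

lemma preMS_le {τ : Ω → ℝ} (hτ : IsStoppingTime 𝓕 (fun ω => ((τ ω : ℝ) : WithTop ℝ))) :
    preMS 𝓕 τ ≤ m := by
  refine sup_le (𝓕.le 0) (MeasurableSpace.generateFrom_le ?_)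
  rintro s ⟨t, A, hA, rfl⟩
  have hlt : {ω | t < τ ω} = {ω | τ ω ≤ t}ᶜ := by ext; simp
  exact (𝓕.le t A hA).inter (hlt ▸ (𝓕.le t _ (measurableSet_le_of_isStoppingTime hτ t)).compl)

lemma preMS_mono {τ τ' : Ω → ℝ} (hτ : IsStoppingTime 𝓕 (fun ω => ((τ ω : ℝ) : WithTop ℝ)))
    (hle : ∀ ω, τ ω ≤ τ' ω) : preMS 𝓕 τ ≤ preMS 𝓕 τ' := by
  refine sup_le le_sup_left (MeasurableSpace.generateFrom_le ?_)
  rintro s ⟨t, A, hA, rfl⟩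
  have hunion : A ∩ {ω | t < τ ω} =
      ⋃ q : {q : ℚ // t < q}, (A ∩ {ω | τ ω ≤ q}ᶜ) ∩ {ω | (q : ℝ) < τ' ω} := by
    ext ω
    simp only [Set.mem_inter_iff, Set.mem_iUnion, Set.mem_ofPred_eq, Set.mem_compl_iff, not_le]
    constructor
    · rintro ⟨hAω, htω⟩
      obtain ⟨q, htq, hqτ⟩ := exists_rat_btwn htω
      exact ⟨⟨q, htq⟩, ⟨hAω, hqτ⟩, hqτ.trans_le (hle ω)⟩
    · rintro ⟨q, ⟨hAω, hqτ⟩, -⟩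
      exact ⟨hAω, q.2.trans hqτ⟩
  rw [hunion]
  exact .iUnion fun q => measurableSet_preMS_inter_lt
    ((𝓕.mono q.2.le A hA).inter (measurableSet_le_of_isStoppingTime hτ q).compl)

lemma measurableSet_preMS_lt {σ : Ω → ℝ}
    (hσ : IsStoppingTime 𝓕 (fun ω => ((σ ω : ℝ) : WithTop ℝ))) (τ : Ω → ℝ) :
    MeasurableSet[preMS 𝓕 τ] {ω | σ ω < τ ω} := by
  have hunion : {ω | σ ω < τ ω} = ⋃ q : ℚ, {ω | σ ω ≤ q} ∩ {ω | (q : ℝ) < τ ω} := by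
    ext ω
    simp only [Set.mem_ofPred_eq, Set.mem_iUnion, Set.mem_inter_iff]
    constructor
    · intro h
      obtain ⟨q, hσq, hqτ⟩ := exists_rat_btwn h
      exact ⟨q, hσq.le, hqτ⟩
    · rintro ⟨q, hσq, hqτ⟩
      exact hσq.trans_lt hqτ
  rw [hunion]
  exact .iUnion fun q => measurableSet_preMS_inter_lt (measurableSet_le_of_isStoppingTime hσ q)

lemma measurableSet_preMS_le_of_isPredST {η τ : Ω → ℝ} (hη : IsPredST 𝓕 η)
    (hτ : ∀ ω, 0 ≤ τ ω) : MeasurableSet[preMS 𝓕 τ] {ω | η ω ≤ τ ω} := by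
  obtain ⟨hη_st, a, ha_st, -, ha_le, ha_lt, ha_lim⟩ := hη
  -- where `η > 0` the announcing times are strictly below `η`
  have hinter : {ω | η ω ≤ τ ω} = {ω | η ω ≤ 0} ∪ ⋂ n, {ω | a n ω < τ ω} := by
    ext ω
    simp only [Set.mem_ofPred_eq, Set.mem_union, Set.mem_iInter]
    constructor
    · intro h
      rcases le_or_gt (η ω) 0 with h0 | h0
      · exact Or.inl h0
      · exact Or.inr fun n => (ha_lt n ω h0).trans_le h
    · rintro (h0 | h)
      · exact h0.trans (hτ ω)
      · exact le_of_tendsto' (ha_lim ω) fun n => (h n).le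
  rw [hinter]
  exact (measurableSet_preMS_of_zero (measurableSet_le_of_isStoppingTime hη_st 0)).union
    (.iInter fun n => measurableSet_preMS_lt (ha_st n) τ)

lemma measurableSet_preMS_le_min {η η' : Ω → ℝ} (hη : η ∈ T0 𝓕 T) (hη' : η' ∈ T0 𝓕 T) :
    MeasurableSet[preMS 𝓕 (fun ω => min (η ω) (η' ω))] {ω | η ω ≤ η' ω} := by
  have hset : {ω | η ω ≤ η' ω} = {ω | η ω ≤ min (η ω) (η' ω)} := by ext; simp
  rw [hset]
  exact measurableSet_preMS_le_of_isPredST hη.1 fun ω => le_min (hη.2 ω).1 (hη'.2 ω).1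

lemma measurableSet_preMS_inter_of_eqOn {η η' : Ω → ℝ} {A C : Set Ω}
    (hA : MeasurableSet[preMS 𝓕 η'] A) (heq : Set.EqOn η η' A)
    (hC : MeasurableSet[preMS 𝓕 η] C) : MeasurableSet[preMS 𝓕 η'] (A ∩ C) := by
  let traceOnA : MeasurableSpace Ω :=
    { MeasurableSet' := fun C => MeasurableSet[preMS 𝓕 η'] (A ∩ C)
      measurableSet_empty := by simp
      measurableSet_compl := fun C hC => by
        rw [← Set.sdiff_eq, ← Set.sdiff_self_inter]
        exact hA.diff hC
      measurableSet_iUnion := fun f hf => by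
        rw [Set.inter_iUnion]
        exact .iUnion hf }
  have hle : preMS 𝓕 η ≤ traceOnA := by
    refine sup_le (fun C hC => hA.inter (measurableSet_preMS_of_zero hC))
      (MeasurableSpace.generateFrom_le ?_)
    rintro _ ⟨t, B, hB, rfl⟩
    have hset : A ∩ (B ∩ {ω | t < η ω}) = A ∩ (B ∩ {ω | t < η' ω}) := by
      ext ω
      simp only [Set.mem_inter_iff, Set.mem_ofPred_eq, and_congr_right_iff]
      intro hω _
      rw [heq hω]
    show MeasurableSet[preMS 𝓕 η'] (A ∩ (B ∩ {ω | t < η ω}))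
    rw [hset]
    exact hA.inter (measurableSet_preMS_inter_lt hB)
  exact hle C hC

end PreMS

section CondExp

variable {α : Type*} {G G' m₀ : MeasurableSpace α} {μ : Measure α}

lemma integrable_of_ae_eq_restrict_compl {A : Set α} {f g₁ g₂ : α → ℝ} (hg₁ : Integrable g₁ μ)
    (hg₂ : Integrable g₂ μ) (hf₁ : f =ᵐ[μ.restrict A] g₁) (hf₂ : f =ᵐ[μ.restrict Aᶜ] g₂) :
    Integrable f μ := by
  have h := (hg₁.integrableOn.congr_fun_ae hf₁.symm).union
    (hg₂.integrableOn.congr_fun_ae hf₂.symm)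
  rwa [Set.union_compl_self, integrableOn_univ] at h

lemma condExp_ae_eq_restrict_of_ae_eq_restrict (hG : G ≤ m₀) {A : Set α}
    (hA : MeasurableSet[G] A) {f g : α → ℝ} (hf : Integrable f μ) (hg : Integrable g μ)
    (hfg : f =ᵐ[μ.restrict A] g) : μ[f|G] =ᵐ[μ.restrict A] μ[g|G] := by
  rw [ae_eq_restrict_iff_indicator_ae_eq (hG _ hA)] at hfg ⊢
  exact (condExp_indicator hf hA).symm.trans
    ((condExp_congr_ae hfg).trans (condExp_indicator hg hA))

lemma condExp_ae_eq_restrict_of_condExp_ae_eq [IsFiniteMeasure μ] (hG : G ≤ m₀)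
    (hG' : G' ≤ G) {A : Set α} (hA : MeasurableSet[G] A) {f g : α → ℝ} (hf : Integrable f μ)
    (hg : μ[g|G'] =ᵐ[μ] g) (hfg : f =ᵐ[μ.restrict A] g) : μ[f|G] =ᵐ[μ.restrict A] g := by
  have hg_int : Integrable g μ := integrable_condExp.congr hg
  have hg_meas : AEStronglyMeasurable[G] g μ :=
    (stronglyMeasurable_condExp.mono hG').aestronglyMeasurable.congr hg
  exact (condExp_ae_eq_restrict_of_ae_eq_restrict hG hA hf hg_int hfg).trans
    (ae_restrict_of_ae (condExp_of_aestronglyMeasurable' hG hg_meas hg_int))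

end CondExp

lemma condExp_preMS_ae_eq_restrict_of_eqOn {μ : Measure Ω} [IsFiniteMeasure μ]
    {𝓕 : Filtration ℝ m} {η η' : Ω → ℝ}
    (hη : IsStoppingTime 𝓕 (fun ω => ((η ω : ℝ) : WithTop ℝ)))
    (hη' : IsStoppingTime 𝓕 (fun ω => ((η' ω : ℝ) : WithTop ℝ))) {A : Set Ω}
    (hA : MeasurableSet[preMS 𝓕 η] A) (hA' : MeasurableSet[preMS 𝓕 η'] A)
    (heq : Set.EqOn η η' A) (f : Ω → ℝ) :
    μ[f|preMS 𝓕 η] =ᵐ[μ.restrict A] μ[f|preMS 𝓕 η'] := by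
  refine condExp_ae_eq_restrict_of_measurableSpace_eq_on (preMS_le hη) (preMS_le hη') hA
    fun C => ⟨fun hC => ?_, fun hC => ?_⟩
  · simpa [← Set.inter_assoc] using measurableSet_preMS_inter_of_eqOn hA' heq hC
  · simpa [← Set.inter_assoc] using measurableSet_preMS_inter_of_eqOn hA heq.symm hC

/-- `V` is a version of the value family `V_p` of the reward family `φ`. -/
structure IsPredValueFamily (𝓕 : Filtration ℝ m) (μ : Measure Ω) (T : ℝ)
    (φ V : (Ω → ℝ) → Ω → ℝ) : Prop where
  consistent : ∀ τ ∈ T0 𝓕 T, ∀ τ' ∈ T0 𝓕 T, ∀ᵐ ω ∂μ, τ ω = τ' ω → φ τ ω = φ τ' ω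
  integrable : ∀ θ ∈ T0 𝓕 T, Integrable (φ θ) μ
  essSup : ∀ σ ∈ T0 𝓕 T, IsEssSupFam μ (fun θ => μ[φ θ|preMS 𝓕 σ]) (TS 𝓕 T σ) (V σ)

/-- The set `A_S^p` of the paper. -/
def martSysTimes (𝓕 : Filtration ℝ m) (μ : Measure Ω) (T : ℝ) (V : (Ω → ℝ) → Ω → ℝ)
    (S : Ω → ℝ) : Set (Ω → ℝ) :=
  {τ | τ ∈ TS 𝓕 T S ∧ MartSysOn 𝓕 μ T V S τ}

section ValueFamily

variable {𝓕 : Filtration ℝ m} {μ : Measure Ω} {T : ℝ} {V : (Ω → ℝ) → Ω → ℝ}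
  {S τ : Ω → ℝ}

namespace MartSysOn

lemma mono_right {τ' : Ω → ℝ} (h : MartSysOn 𝓕 μ T V S τ) (hτ' : ∀ ω, τ' ω ≤ τ ω) :
    MartSysOn 𝓕 μ T V S τ' :=
  fun σ hσ σ' hσ' hSσ hσσ' hσ'τ => h σ hσ σ' hσ' hSσ hσσ' fun ω => (hσ'τ ω).trans (hτ' ω)

lemma condExp_preMS_self (h : MartSysOn 𝓕 μ T V S τ) {η : Ω → ℝ} (hη : η ∈ T0 𝓕 T)
    (hSη : ∀ ω, S ω ≤ η ω) (hητ : ∀ ω, η ω ≤ τ ω) : μ[V η|preMS 𝓕 η] =ᵐ[μ] V η :=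
  h η hη η hη hSη (fun _ => le_rfl) hητ

end MartSysOn

variable [IsFiniteMeasure μ] {φ : (Ω → ℝ) → Ω → ℝ}

namespace IsPredValueFamily

lemma ae_le_restrict_of_eqOn (hV : IsPredValueFamily 𝓕 μ T φ V) {η η' : Ω → ℝ}
    (hη : η ∈ T0 𝓕 T) (hη' : η' ∈ T0 𝓕 T) {A : Set Ω} (hA : MeasurableSet[preMS 𝓕 η] A)
    (hA' : MeasurableSet[preMS 𝓕 η'] A) (heq : Set.EqOn η η' A) :
    V η ≤ᵐ[μ.restrict A] V η' := by
  classical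
  have hAm : MeasurableSet A := preMS_le hη.1.1 _ hA
  -- a time `θ ≥ η` agrees on `A` with `θ ∨ η' ≥ η'`, so `V η'` bounds the family defining `V η`
  have hbound : ∀ θ ∈ TS 𝓕 T η, μ[φ θ|preMS 𝓕 η] ≤ᵐ[μ] A.piecewise (V η') (V η) := by
    intro θ hθ
    set θ' : Ω → ℝ := fun ω => max (θ ω) (η' ω)
    have hθ' : θ' ∈ TS 𝓕 T η' := ⟨max_mem_T0 hθ.1 hη', fun ω => le_max_right _ _⟩
    have hφ : φ θ =ᵐ[μ.restrict A] φ θ' := by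
      filter_upwards [ae_restrict_mem hAm,
        ae_restrict_of_ae (hV.consistent θ hθ.1 θ' hθ'.1)] with ω hω h
      exact h (max_eq_left (heq hω ▸ hθ.2 ω)).symm
    have hon : μ[φ θ|preMS 𝓕 η] ≤ᵐ[μ.restrict A] V η' :=
      ((condExp_ae_eq_restrict_of_ae_eq_restrict (preMS_le hη.1.1) hA (hV.integrable θ hθ.1)
        (hV.integrable θ' hθ'.1) hφ).trans
        (condExp_preMS_ae_eq_restrict_of_eqOn hη.1.1 hη'.1.1 hA hA' heq _)).le.trans
        (ae_restrict_of_ae ((hV.essSup η' hη').1 θ' hθ'))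
    refine ae_of_ae_restrict_of_ae_restrict_compl A ?_ ?_
    · filter_upwards [hon, ae_restrict_mem hAm] with ω h hω
      simpa [hω] using h
    · filter_upwards [ae_restrict_of_ae ((hV.essSup η hη).1 θ hθ),
        ae_restrict_mem hAm.compl] with ω h hω
      simpa [Set.piecewise_eq_of_notMem _ _ _ hω] using h
  filter_upwards [ae_restrict_of_ae ((hV.essSup η hη).2 _ hbound), ae_restrict_mem hAm]
    with ω h hω
  simpa [hω] using h

lemma ae_eq_restrict_of_eqOn (hV : IsPredValueFamily 𝓕 μ T φ V) {η η' : Ω → ℝ}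
    (hη : η ∈ T0 𝓕 T) (hη' : η' ∈ T0 𝓕 T) {A : Set Ω} (hA : MeasurableSet[preMS 𝓕 η] A)
    (hA' : MeasurableSet[preMS 𝓕 η'] A) (heq : Set.EqOn η η' A) :
    V η =ᵐ[μ.restrict A] V η' :=
  (hV.ae_le_restrict_of_eqOn hη hη' hA hA' heq).antisymm
    (hV.ae_le_restrict_of_eqOn hη' hη hA' hA heq.symm)

end IsPredValueFamily

end ValueFamily

namespace IsPredValueFamily

variable {𝓕 : Filtration ℝ m} {μ : Measure Ω} [IsFiniteMeasure μ] {T : ℝ}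
  {φ V : (Ω → ℝ) → Ω → ℝ} {S τ τ₁ τ₂ ρ : Ω → ℝ}

lemma condExp_preMS_ae_eq_min (hV : IsPredValueFamily 𝓕 μ T φ V)
    (hτ : τ ∈ martSysTimes 𝓕 μ T V S) (hρ : ρ ∈ T0 𝓕 T) (hSρ : ∀ ω, S ω ≤ ρ ω) :
    μ[V τ|preMS 𝓕 ρ] =ᵐ[μ] V (fun ω => min (ρ ω) (τ ω)) := by
  obtain ⟨⟨hτ₀, hSτ⟩, hM⟩ := hτ
  set κ : Ω → ℝ := fun ω => min (ρ ω) (τ ω)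
  have hκ : κ ∈ T0 𝓕 T := min_mem_T0 hρ hτ₀
  have hSκ : ∀ ω, S ω ≤ κ ω := fun ω => le_min (hSρ ω) (hSτ ω)
  have hκρ : preMS 𝓕 κ ≤ preMS 𝓕 ρ := preMS_mono hκ.1.1 fun ω => min_le_left _ _
  have hB : MeasurableSet[preMS 𝓕 κ] {ω | ρ ω ≤ τ ω} := measurableSet_preMS_le_min hρ hτ₀
  refine ae_of_ae_restrict_of_ae_restrict_compl {ω | ρ ω ≤ τ ω} ?_ ?_
  · exact (condExp_preMS_ae_eq_restrict_of_eqOn hρ.1.1 hκ.1.1 (hκρ _ hB) hB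
      (fun ω hω => (min_eq_left hω).symm) _).trans
      (ae_restrict_of_ae (hM κ hκ τ hτ₀ hSκ (fun ω => min_le_right _ _) fun _ => le_rfl))
  · have hloc : V τ =ᵐ[μ.restrict {ω | ρ ω ≤ τ ω}ᶜ] V κ :=
      hV.ae_eq_restrict_of_eqOn hτ₀ hκ
        (preMS_mono hκ.1.1 (fun ω => min_le_right _ _) _ hB.compl) hB.compl
        fun ω (hω : ¬ ρ ω ≤ τ ω) => (min_eq_right (le_of_not_ge hω)).symm
    exact condExp_ae_eq_restrict_of_condExp_ae_eq (preMS_le hρ.1.1) hκρ (hκρ _ hB.compl)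
      (integrable_condExp.congr (hM.condExp_preMS_self hτ₀ hSτ fun _ => le_rfl))
      (hM.condExp_preMS_self hκ hSκ fun ω => min_le_right _ _) hloc

lemma condExp_preMS_self_of_le_max (hV : IsPredValueFamily 𝓕 μ T φ V)
    (h₁ : τ₁ ∈ martSysTimes 𝓕 μ T V S) (h₂ : τ₂ ∈ martSysTimes 𝓕 μ T V S)
    (hρ : ρ ∈ T0 𝓕 T) (hSρ : ∀ ω, S ω ≤ ρ ω) (hρτ : ∀ ω, ρ ω ≤ max (τ₁ ω) (τ₂ ω)) :
    μ[V ρ|preMS 𝓕 ρ] =ᵐ[μ] V ρ := by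
  obtain ⟨⟨hτ₁, hSτ₁⟩, hM₁⟩ := h₁
  obtain ⟨⟨hτ₂, hSτ₂⟩, hM₂⟩ := h₂
  set κ₁ : Ω → ℝ := fun ω => min (ρ ω) (τ₁ ω)
  set κ₂ : Ω → ℝ := fun ω => min (ρ ω) (τ₂ ω)
  have hκ₁ : κ₁ ∈ T0 𝓕 T := min_mem_T0 hρ hτ₁
  have hκ₂ : κ₂ ∈ T0 𝓕 T := min_mem_T0 hρ hτ₂
  have hκ₁ρ : preMS 𝓕 κ₁ ≤ preMS 𝓕 ρ := preMS_mono hκ₁.1.1 fun ω => min_le_left _ _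
  have hκ₂ρ : preMS 𝓕 κ₂ ≤ preMS 𝓕 ρ := preMS_mono hκ₂.1.1 fun ω => min_le_left _ _
  set B : Set Ω := {ω | ρ ω ≤ τ₁ ω}
  have hB : MeasurableSet[preMS 𝓕 κ₁] B := measurableSet_preMS_le_min hρ hτ₁
  have hBc_le : ∀ ω ∈ Bᶜ, ρ ω ≤ τ₂ ω := fun ω (hω : ¬ ρ ω ≤ τ₁ ω) =>
    (le_max_iff.1 (hρτ ω)).resolve_left hω
  have hBc : MeasurableSet[preMS 𝓕 κ₂] Bᶜ := by
    have h := measurableSet_preMS_inter_of_eqOn (measurableSet_preMS_le_min hρ hτ₂)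
      (fun ω (hω : ρ ω ≤ τ₂ ω) => (min_eq_left hω).symm) (hκ₁ρ _ hB).compl
    rwa [Set.inter_eq_right.2 (show Bᶜ ⊆ {ω | ρ ω ≤ τ₂ ω} from hBc_le)] at h
  have e₁ : V ρ =ᵐ[μ.restrict B] V κ₁ := hV.ae_eq_restrict_of_eqOn hρ hκ₁ (hκ₁ρ _ hB) hB
    fun ω hω => (min_eq_left hω).symm
  have e₂ : V ρ =ᵐ[μ.restrict Bᶜ] V κ₂ := hV.ae_eq_restrict_of_eqOn hρ hκ₂ (hκ₂ρ _ hBc) hBc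
    fun ω hω => (min_eq_left (hBc_le ω hω)).symm
  have r₁ : μ[V κ₁|preMS 𝓕 κ₁] =ᵐ[μ] V κ₁ :=
    hM₁.condExp_preMS_self hκ₁ (fun ω => le_min (hSρ ω) (hSτ₁ ω)) fun ω => min_le_right _ _
  have r₂ : μ[V κ₂|preMS 𝓕 κ₂] =ᵐ[μ] V κ₂ :=
    hM₂.condExp_preMS_self hκ₂ (fun ω => le_min (hSρ ω) (hSτ₂ ω)) fun ω => min_le_right _ _
  have hint : Integrable (V ρ) μ := integrable_of_ae_eq_restrict_compl
    (integrable_condExp.congr r₁) (integrable_condExp.congr r₂) e₁ e₂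
  refine ae_of_ae_restrict_of_ae_restrict_compl B ?_ ?_
  · exact (condExp_ae_eq_restrict_of_condExp_ae_eq (preMS_le hρ.1.1) hκ₁ρ (hκ₁ρ _ hB) hint r₁
      e₁).trans e₁.symm
  · exact (condExp_ae_eq_restrict_of_condExp_ae_eq (preMS_le hρ.1.1) hκ₂ρ (hκ₂ρ _ hBc) hint r₂
      e₂).trans e₂.symm

lemma condExp_max_preMS_ae_eq_restrict (hV : IsPredValueFamily 𝓕 μ T φ V)
    (h₁ : τ₁ ∈ martSysTimes 𝓕 μ T V S) (h₂ : τ₂ ∈ martSysTimes 𝓕 μ T V S) {ζ : Ω → ℝ}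
    (hζ : ζ ∈ T0 𝓕 T) (hτζ : ∀ ω, min (τ₁ ω) (τ₂ ω) ≤ ζ ω)
    (hζτ : ∀ ω, ζ ω ≤ max (τ₁ ω) (τ₂ ω)) :
    μ[V (fun ω => max (τ₁ ω) (τ₂ ω))|preMS 𝓕 ζ] =ᵐ[μ.restrict {ω | τ₂ ω ≤ τ₁ ω}] V ζ := by
  set θ : Ω → ℝ := fun ω => max (τ₁ ω) (τ₂ ω)
  set κ : Ω → ℝ := fun ω => min (τ₂ ω) (τ₁ ω)
  set ζτ : Ω → ℝ := fun ω => min (ζ ω) (τ₁ ω)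
  have hθ : θ ∈ T0 𝓕 T := max_mem_T0 h₁.1.1 h₂.1.1
  have hζτ₀ : ζτ ∈ T0 𝓕 T := min_mem_T0 hζ h₁.1.1
  have hκζ : ∀ ω, κ ω ≤ ζ ω := fun ω => (min_comm (τ₂ ω) (τ₁ ω)).trans_le (hτζ ω)
  have hSζ : ∀ ω, S ω ≤ ζ ω := fun ω => (le_min (h₂.1.2 ω) (h₁.1.2 ω)).trans (hκζ ω)
  have hA : MeasurableSet[preMS 𝓕 κ] {ω | τ₂ ω ≤ τ₁ ω} :=
    measurableSet_preMS_le_min h₂.1.1 h₁.1.1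
  have hAof : ∀ {η : Ω → ℝ}, (∀ ω, κ ω ≤ η ω) → MeasurableSet[preMS 𝓕 η] {ω | τ₂ ω ≤ τ₁ ω} :=
    fun hκη => preMS_mono (min_mem_T0 h₂.1.1 h₁.1.1).1.1 hκη _ hA
  -- on `{τ₂ ≤ τ₁}` the maximum is `τ₁`, which dominates `ζ` there
  have e₁ : V θ =ᵐ[μ.restrict {ω | τ₂ ω ≤ τ₁ ω}] V τ₁ :=
    hV.ae_eq_restrict_of_eqOn hθ h₁.1.1 (hAof fun ω => (hκζ ω).trans (hζτ ω))
      (hAof fun ω => min_le_right _ _) fun ω hω => max_eq_left hω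
  have e₂ : V ζτ =ᵐ[μ.restrict {ω | τ₂ ω ≤ τ₁ ω}] V ζ :=
    hV.ae_eq_restrict_of_eqOn hζτ₀ hζ (hAof fun ω => le_min (hκζ ω) (min_le_right _ _))
      (hAof hκζ) fun ω (hω : τ₂ ω ≤ τ₁ ω) => min_eq_left ((hζτ ω).trans (max_eq_left hω).le)
  have hθ_int : Integrable (V θ) μ := integrable_condExp.congr
    (hV.condExp_preMS_self_of_le_max h₁ h₂ hθ (fun ω => (h₁.1.2 ω).trans (le_max_left _ _))
      fun _ => le_rfl)
  have hτ₁_int : Integrable (V τ₁) μ :=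
    integrable_condExp.congr (h₁.2.condExp_preMS_self h₁.1.1 h₁.1.2 fun _ => le_rfl)
  exact (condExp_ae_eq_restrict_of_ae_eq_restrict (preMS_le hζ.1.1) (hAof hκζ) hθ_int hτ₁_int
    e₁).trans
    (((hV.condExp_preMS_ae_eq_min h₁ hζ hSζ).filter_mono ae_restrict_le).trans e₂)

lemma condExp_max_preMS_of_min_le (hV : IsPredValueFamily 𝓕 μ T φ V)
    (h₁ : τ₁ ∈ martSysTimes 𝓕 μ T V S) (h₂ : τ₂ ∈ martSysTimes 𝓕 μ T V S) {ζ : Ω → ℝ}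
    (hζ : ζ ∈ T0 𝓕 T) (hτζ : ∀ ω, min (τ₁ ω) (τ₂ ω) ≤ ζ ω)
    (hζτ : ∀ ω, ζ ω ≤ max (τ₁ ω) (τ₂ ω)) :
    μ[V (fun ω => max (τ₁ ω) (τ₂ ω))|preMS 𝓕 ζ] =ᵐ[μ] V ζ := by
  have h₂₁ := hV.condExp_max_preMS_ae_eq_restrict h₂ h₁ hζ
    (fun ω => (min_comm (τ₂ ω) (τ₁ ω)).trans_le (hτζ ω))
    (fun ω => (hζτ ω).trans_eq (max_comm _ _))
  rw [show (fun ω => max (τ₂ ω) (τ₁ ω)) = fun ω => max (τ₁ ω) (τ₂ ω) from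
    funext fun ω => max_comm _ _] at h₂₁
  exact ae_of_ae_restrict_of_ae_restrict_compl _
    (hV.condExp_max_preMS_ae_eq_restrict h₁ h₂ hζ hτζ hζτ)
    (ae_restrict_of_ae_restrict_of_subset (fun ω (hω : ¬ τ₂ ω ≤ τ₁ ω) => le_of_not_ge hω) h₂₁)

lemma condExp_max_min_preMS (hV : IsPredValueFamily 𝓕 μ T φ V)
    (h₁ : τ₁ ∈ martSysTimes 𝓕 μ T V S) (h₂ : τ₂ ∈ martSysTimes 𝓕 μ T V S)
    (hρ : ρ ∈ T0 𝓕 T) (hSρ : ∀ ω, S ω ≤ ρ ω) (hρτ : ∀ ω, ρ ω ≤ max (τ₁ ω) (τ₂ ω)) :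
    μ[V (fun ω => max (ρ ω) (min (τ₁ ω) (τ₂ ω)))|preMS 𝓕 ρ] =ᵐ[μ] V ρ := by
  set ν : Ω → ℝ := fun ω => min (τ₁ ω) (τ₂ ω)
  set ζ : Ω → ℝ := fun ω => max (ρ ω) (ν ω)
  set κ : Ω → ℝ := fun ω => min (ρ ω) (ν ω)
  have hν : ν ∈ martSysTimes 𝓕 μ T V S :=
    ⟨⟨min_mem_T0 h₁.1.1 h₂.1.1, fun ω => le_min (h₁.1.2 ω) (h₂.1.2 ω)⟩,
      h₁.2.mono_right fun ω => min_le_left _ _⟩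
  have hζ : ζ ∈ T0 𝓕 T := max_mem_T0 hρ hν.1.1
  have hκ : κ ∈ T0 𝓕 T := min_mem_T0 hρ hν.1.1
  have hκ_le : ∀ {η : Ω → ℝ}, (∀ ω, κ ω ≤ η ω) → preMS 𝓕 κ ≤ preMS 𝓕 η :=
    fun hκη => preMS_mono hκ.1.1 hκη
  have hκρ : ∀ ω, κ ω ≤ ρ ω := fun ω => min_le_left _ _
  have hκζ : ∀ ω, κ ω ≤ ζ ω := fun ω => (hκρ ω).trans (le_max_left _ _)
  set R : Set Ω := {ω | ρ ω ≤ ν ω}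
  have hR : MeasurableSet[preMS 𝓕 κ] R := measurableSet_preMS_le_min hρ hν.1.1
  have hζ_int : Integrable (V ζ) μ := integrable_condExp.congr
    (hV.condExp_preMS_self_of_le_max h₁ h₂ hζ (fun ω => (hSρ ω).trans (le_max_left _ _))
      fun ω => max_le (hρτ ω) (min_le_max))
  refine ae_of_ae_restrict_of_ae_restrict_compl R ?_ ?_
  · have e₁ : V ζ =ᵐ[μ.restrict R] V ν :=
      hV.ae_eq_restrict_of_eqOn hζ hν.1.1 (hκ_le hκζ _ hR)
        (hκ_le (fun ω => min_le_right _ _) _ hR) fun ω hω => max_eq_right hω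
    have e₂ : V κ =ᵐ[μ.restrict R] V ρ :=
      hV.ae_eq_restrict_of_eqOn hκ hρ hR (hκ_le hκρ _ hR) fun ω hω => min_eq_left hω
    have hν_int : Integrable (V ν) μ :=
      integrable_condExp.congr (hν.2.condExp_preMS_self hν.1.1 hν.1.2 fun _ => le_rfl)
    exact (condExp_ae_eq_restrict_of_ae_eq_restrict (preMS_le hρ.1.1) (hκ_le hκρ _ hR) hζ_int
      hν_int e₁).trans
      (((hV.condExp_preMS_ae_eq_min hν hρ hSρ).filter_mono ae_restrict_le).trans e₂)
  · have e : V ζ =ᵐ[μ.restrict Rᶜ] V ρ :=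
      hV.ae_eq_restrict_of_eqOn hζ hρ (hκ_le hκζ _ hR).compl (hκ_le hκρ _ hR).compl
        fun ω (hω : ¬ ρ ω ≤ ν ω) => max_eq_left (le_of_not_ge hω)
    exact condExp_ae_eq_restrict_of_condExp_ae_eq (preMS_le hρ.1.1) le_rfl
      (hκ_le hκρ _ hR).compl hζ_int (hV.condExp_preMS_self_of_le_max h₁ h₂ hρ hSρ hρτ) e

lemma condExp_max_preMS (hV : IsPredValueFamily 𝓕 μ T φ V)
    (h₁ : τ₁ ∈ martSysTimes 𝓕 μ T V S) (h₂ : τ₂ ∈ martSysTimes 𝓕 μ T V S)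
    (hρ : ρ ∈ T0 𝓕 T) (hSρ : ∀ ω, S ω ≤ ρ ω) (hρτ : ∀ ω, ρ ω ≤ max (τ₁ ω) (τ₂ ω)) :
    μ[V (fun ω => max (τ₁ ω) (τ₂ ω))|preMS 𝓕 ρ] =ᵐ[μ] V ρ := by
  -- condition first on `ζ⁻`, where `ζ ≥ ρ` is late enough to see which of `τ₁, τ₂` is larger
  set ζ : Ω → ℝ := fun ω => max (ρ ω) (min (τ₁ ω) (τ₂ ω))
  have hζ : ζ ∈ T0 𝓕 T := max_mem_T0 hρ (min_mem_T0 h₁.1.1 h₂.1.1)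
  calc μ[V (fun ω => max (τ₁ ω) (τ₂ ω))|preMS 𝓕 ρ]
      =ᵐ[μ] μ[μ[V (fun ω => max (τ₁ ω) (τ₂ ω))|preMS 𝓕 ζ]|preMS 𝓕 ρ] :=
        (condExp_condExp_of_le (preMS_mono hρ.1.1 fun ω => le_max_left _ _)
          (preMS_le hζ.1.1)).symm
    _ =ᵐ[μ] μ[V ζ|preMS 𝓕 ρ] := condExp_congr_ae
        (hV.condExp_max_preMS_of_min_le h₁ h₂ hζ (fun ω => le_max_right _ _)
          fun ω => max_le (hρτ ω) min_le_max)
    _ =ᵐ[μ] V ρ := hV.condExp_max_min_preMS h₁ h₂ hρ hSρ hρτ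

end IsPredValueFamily

theorem stmt16_general (μ : Measure Ω) [IsProbabilityMeasure μ] (𝓕 : Filtration ℝ m) (T : ℝ)
    (φ : (Ω → ℝ) → Ω → ℝ) (hφ : Admissible 𝓕 μ T φ)
    (hφUI : UniformIntegrable (fun τ : T0 𝓕 T => φ τ.1) 1 μ)
    (V : (Ω → ℝ) → Ω → ℝ)
    (hV : ∀ σ ∈ T0 𝓕 T,
      IsEssSupFam μ (fun θ => μ[φ θ|preMS 𝓕 σ]) (TS 𝓕 T σ) (V σ))
    (S : Ω → ℝ)
    (τ1 τ2 : Ω → ℝ)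
    (h1 : τ1 ∈ TS 𝓕 T S ∧ MartSysOn 𝓕 μ T V S τ1)
    (h2 : τ2 ∈ TS 𝓕 T S ∧ MartSysOn 𝓕 μ T V S τ2) :
    (fun ω => max (τ1 ω) (τ2 ω)) ∈ TS 𝓕 T S ∧
      MartSysOn 𝓕 μ T V S (fun ω => max (τ1 ω) (τ2 ω)) := by
  have hVp : IsPredValueFamily 𝓕 μ T φ V :=
    ⟨hφ.consistent, fun θ hθ => memLp_one_iff_integrable.1 (hφUI.memLp ⟨θ, hθ⟩), hV⟩
  refine ⟨⟨max_mem_T0 h1.1.1 h2.1.1, fun ω => (h1.1.2 ω).trans (le_max_left _ _)⟩, ?_⟩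
  intro σ hσ σ' hσ' hSσ hσσ' hσ'τ
  calc μ[V σ'|preMS 𝓕 σ]
      =ᵐ[μ] μ[μ[V (fun ω => max (τ1 ω) (τ2 ω))|preMS 𝓕 σ']|preMS 𝓕 σ] :=
        condExp_congr_ae (hVp.condExp_max_preMS h1 h2 hσ' (fun ω => (hSσ ω).trans (hσσ' ω))
          hσ'τ).symm
    _ =ᵐ[μ] μ[V (fun ω => max (τ1 ω) (τ2 ω))|preMS 𝓕 σ] :=
        condExp_condExp_of_le (preMS_mono hσ.1.1 hσσ') (preMS_le hσ'.1.1)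
    _ =ᵐ[μ] V σ := hVp.condExp_max_preMS h1 h2 hσ hSσ fun ω => (hσσ' ω).trans (hσ'τ ω)

theorem stmt16 (μ : Measure Ω) [IsProbabilityMeasure μ] (𝓕 : Filtration ℝ m) (T : ℝ)
    (φ : (Ω → ℝ) → Ω → ℝ) (hφ : Admissible 𝓕 μ T φ)
    (hφUI : UniformIntegrable (fun τ : T0 𝓕 T => φ τ.1) 1 μ)
    (V : (Ω → ℝ) → Ω → ℝ)
    (hV : ∀ σ ∈ T0 𝓕 T,
      IsEssSupFam μ (fun θ => μ[φ θ|preMS 𝓕 σ]) (TS 𝓕 T σ) (V σ))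
    (S : Ω → ℝ) (hS : S ∈ T0 𝓕 T)
    (τ1 τ2 : Ω → ℝ)
    (h1 : τ1 ∈ TS 𝓕 T S ∧ MartSysOn 𝓕 μ T V S τ1)
    (h2 : τ2 ∈ TS 𝓕 T S ∧ MartSysOn 𝓕 μ T V S τ2) :
    (fun ω => max (τ1 ω) (τ2 ω)) ∈ TS 𝓕 T S ∧
      MartSysOn 𝓕 μ T V S (fun ω => max (τ1 ω) (τ2 ω)) :=
  stmt16_general μ 𝓕 T φ hφ hφUI V hV S τ1 τ2 h1 h2
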